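/- arXiv:1804.05352 — 3 statements merged into one kernel-verified Lean document; each statement's English description precedes it below -/
import Mathlib

section
/- For any two points z, w in the open unit disk, there exists a Carleson box Q_I such that z and w both lie in Q_I and (1/16)|Q_I| ≤ |1 - z·conj(w)|^2 ≤ 8|Q_I|, where |Q_I| denotes the normalized Lebesgue area of Q_I. -/
open Complex Set MeasureTheory

/-- Normalized Lebesgue area on the plane (the unit disk has area 1). -/
noncomputable def nArea (S : Set ℂ) : ℝ := (volume S).toReal / Real.pi

/-- The Carleson box of the arc of the unit circle starting at angle `θ` with
normalized arc length `t`. -/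
def carlesonBox (θ t : ℝ) : Set ℂ :=
  {z : ℂ | 1 - t ≤ ‖z‖ ∧ ‖z‖ < 1 ∧
    ∃ s ∈ Set.Ico θ (θ + 2 * Real.pi * t), z = (‖z‖ : ℂ) * Complex.exp (s * Complex.I)}


/-!
Let `d = ‖1 - z * conj w‖` and `t = min d 1`. In polar coordinates the box of aperture `t` has
normalised area `t ^ 2 * (2 - t)`, which lies between `t ^ 2` and `2 * t ^ 2` and is therefore
comparable to `d ^ 2`, as `d < 2`. Both points fit into one box of aperture `t`: radially because
`d ≥ 1 - ‖z‖ * ‖w‖`, and angularly because the law of cosines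
`d ^ 2 = (1 - ‖z‖ * ‖w‖) ^ 2 + 2 * ‖z‖ * ‖w‖ * (1 - cos φ)` together with
`1 - cos φ ≥ 2 * φ ^ 2 / π ^ 2` bounds the angular distance `φ ∈ [0, π]` by `2 * π * t`.
-/

open Real ComplexConjugate

lemma Complex.polarCoord_symm_eq_mul_exp (p : ℝ × ℝ) :
    Complex.polarCoord.symm p = p.1 * exp (p.2 * I) := by
  rw [Complex.polarCoord_symm_apply, exp_mul_I, ← ofReal_cos, ← ofReal_sin]

lemma injOn_polarCoord_symm {c e : ℝ} (hce : e - c ≤ 2 * π) :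
    InjOn polarCoord.symm (Ioi 0 ×ˢ Ico c e) := by
  rintro p ⟨hp₁, hp₂⟩ q ⟨hq₁, hq₂⟩ hpq
  replace hpq : Complex.polarCoord.symm p = Complex.polarCoord.symm q := by
    rw [← measurableEquivRealProd_symm_polarCoord_symm_apply, hpq,
      measurableEquivRealProd_symm_polarCoord_symm_apply]
  have hr : p.1 = q.1 := by
    simpa [abs_of_pos (mem_Ioi.1 hp₁), abs_of_pos (mem_Ioi.1 hq₁)] using
      congrArg norm hpq
  rw [Complex.polarCoord_symm_eq_mul_exp, Complex.polarCoord_symm_eq_mul_exp, hr,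
    mul_right_inj' (ofReal_ne_zero.2 (ne_of_gt (hr ▸ hp₁)))] at hpq
  refine Prod.ext hr (Circle.exp_injOn_Ico hce hp₂ hq₂ ?_)
  ext
  simpa [Circle.coe_exp] using hpq

lemma lintegral_abs_fst_Ioo_prod {a b : ℝ} (ha : 0 ≤ a) (hab : a ≤ b) (s : Set ℝ) :
    ∫⁻ p in Ioo a b ×ˢ s, ENNReal.ofReal |p.1| =
      ENNReal.ofReal ((b ^ 2 - a ^ 2) / 2) * volume s := by
  have hprod := lintegral_prod_mul (μ := volume.restrict (Ioo a b)) (ν := volume.restrict s)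
    (f := fun r => ENNReal.ofReal |r|) (g := fun _ => 1) (by fun_prop) (by fun_prop)
  simp only [mul_one, lintegral_one, Measure.restrict_apply_univ] at hprod
  rw [Measure.volume_eq_prod, ← Measure.prod_restrict, hprod,
    setLIntegral_congr_fun measurableSet_Ioo fun r hr => by rw [abs_of_pos (ha.trans_lt hr.1)],
    ← ofReal_integral_eq_lintegral_ofReal, ← integral_Ioc_eq_integral_Ioo,
    ← intervalIntegral.integral_of_le hab, integral_id]
  · exact continuous_id.integrableOn_Icc.mono_set Ioo_subset_Icc_self
  · exact (ae_restrict_iff' measurableSet_Ioo).2 (.of_forall fun r hr => ha.trans hr.1.le)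

lemma volume_image_polarCoord_symm {a b c e : ℝ} (ha : 0 ≤ a) (hab : a ≤ b)
    (he : e - c ≤ 2 * π) :
    volume (Complex.polarCoord.symm '' (Ioo a b ×ˢ Ico c e)) =
      ENNReal.ofReal ((b ^ 2 - a ^ 2) / 2 * (e - c)) := by
  have himage : Complex.polarCoord.symm '' (Ioo a b ×ˢ Ico c e) =
      measurableEquivRealProd ⁻¹' (polarCoord.symm '' (Ioo a b ×ˢ Ico c e)) := by
    rw [← MeasurableEquiv.image_symm, image_image]
    rfl
  have hinj : InjOn polarCoord.symm (Ioo a b ×ˢ Ico c e) :=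
    (injOn_polarCoord_symm he).mono
      (prod_mono (fun r hr => ha.trans_lt hr.1) subset_rfl)
  rw [himage, Complex.volume_preserving_equiv_real_prod.measure_preimage_equiv,
    ← lintegral_abs_det_fderiv_eq_addHaar_image volume (measurableSet_Ioo.prod measurableSet_Ico)
      (fun p _ => (hasFDerivAt_polarCoord_symm p).hasFDerivWithinAt) hinj]
  simp only [det_fderivPolarCoordSymm]
  rw [lintegral_abs_fst_Ioo_prod ha hab, volume_Ico, ← ENNReal.ofReal_mul (by nlinarith)]

lemma carlesonBox_diff_sphere {θ t : ℝ} (ht : t ≤ 1) :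
    carlesonBox θ t \ Metric.sphere 0 (1 - t) =
      Complex.polarCoord.symm '' (Ioo (1 - t) 1 ×ˢ Ico θ (θ + 2 * π * t)) := by
  ext z
  simp only [carlesonBox, mem_sdiff, mem_ofPred_eq, mem_sphere_zero_iff_norm, mem_image, mem_prod,
    Prod.exists, Complex.polarCoord_symm_eq_mul_exp]
  constructor
  · rintro ⟨⟨h₁, h₂, s, hs, hz⟩, hne⟩
    exact ⟨‖z‖, s, ⟨⟨lt_of_le_of_ne h₁ (Ne.symm hne), h₂⟩, hs⟩, hz.symm⟩
  · rintro ⟨r, s, ⟨hr, hs⟩, rfl⟩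
    have hnorm : ‖(r : ℂ) * exp (s * I)‖ = r := by
      rw [norm_mul, norm_exp_ofReal_mul_I, mul_one, norm_real,
        Real.norm_of_nonneg (by linarith [hr.1])]
    rw [hnorm]
    exact ⟨⟨hr.1.le, hr.2, s, hs, rfl⟩, hr.1.ne'⟩

lemma nArea_carlesonBox {θ t : ℝ} (ht₀ : 0 < t) (ht₁ : t ≤ 1) :
    nArea (carlesonBox θ t) = t ^ 2 * (2 - t) := by
  have harea : (1 ^ 2 - (1 - t) ^ 2) / 2 * (θ + 2 * π * t - θ) = π * (t ^ 2 * (2 - t)) := by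
    ring
  -- Off the null inner circle the polar map is injective, even when the inner radius is `0`.
  rw [nArea, ← measure_sdiff_null (Measure.addHaar_sphere volume 0 (1 - t)),
    carlesonBox_diff_sphere ht₁,
    volume_image_polarCoord_symm (by linarith) (by linarith) (by nlinarith [pi_gt_three]), harea,
    ENNReal.toReal_ofReal (mul_nonneg pi_pos.le (mul_nonneg (sq_nonneg t) (by linarith))),
    mul_div_cancel_left₀ _ pi_ne_zero]

lemma Complex.re_mul_conj_eq_mul_cos_arg_sub (z w : ℂ) :
    (z * conj w).re = ‖z‖ * ‖w‖ * Real.cos (arg z - arg w) := by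
  rw [mul_re, conj_re, conj_im, Real.cos_sub, ← norm_mul_cos_arg z, ← norm_mul_cos_arg w,
    ← norm_mul_sin_arg z, ← norm_mul_sin_arg w]
  ring

lemma Complex.norm_one_sub_mul_conj_sq (z w : ℂ) :
    ‖1 - z * conj w‖ ^ 2 =
      (1 - ‖z‖ * ‖w‖) ^ 2 + 2 * (‖z‖ * ‖w‖) * (1 - Real.cos (arg z - arg w)) := by
  rw [Complex.sq_norm, normSq_sub, one_mul, conj_re, re_mul_conj_eq_mul_cos_arg_sub, map_one,
    normSq_mul, normSq_conj, ← Complex.sq_norm, ← Complex.sq_norm]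
  ring

lemma lt_two_pi_mul_min_of_sq_eq {x φ d : ℝ} (hx₀ : 0 ≤ x) (hx₁ : x < 1) (hφ₀ : 0 ≤ φ)
    (hφπ : φ ≤ π) (hd₀ : 0 ≤ d) (hd : d ^ 2 = (1 - x) ^ 2 + 2 * x * (1 - Real.cos φ)) :
    φ < 2 * π * min d 1 := by
  have hπ := pi_pos
  have hcos₁ : 0 ≤ x * (1 - Real.cos φ) := mul_nonneg hx₀ (sub_nonneg.2 (Real.cos_le_one φ))
  rcases le_or_gt d (1 / 2) with hd_small | hd_large
  · have hd_pos : 0 < d := by nlinarith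
    have hx_half : 1 / 2 ≤ x := by nlinarith
    have hcos₂ : 2 * (φ / π) ^ 2 ≤ 1 - Real.cos φ := by
      have := cos_le_one_sub_mul_cos_sq (abs_le.2 ⟨by linarith, hφπ⟩)
      rw [div_pow]
      linarith [show 2 / π ^ 2 * φ ^ 2 = 2 * (φ ^ 2 / π ^ 2) by ring]
    have hφd : φ / π ≤ d := by
      refine (pow_le_pow_iff_left₀ (by positivity) hd₀ two_ne_zero).1 ?_
      nlinarith [mul_le_mul_of_nonneg_left hcos₂ hx₀, sq_nonneg (φ / π)]
    rw [min_eq_left (by linarith)]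
    rw [div_le_iff₀ hπ] at hφd
    nlinarith
  · have : 1 / 2 < min d 1 := lt_min hd_large (by norm_num)
    nlinarith

lemma mem_carlesonBox_of_arg_sub_mem {z : ℂ} {θ t : ℝ} (k : ℤ) (h₁ : 1 - t ≤ ‖z‖)
    (h₂ : ‖z‖ < 1) (hk : arg z - 2 * k * π ∈ Ico θ (θ + 2 * π * t)) :
    z ∈ carlesonBox θ t := by
  refine ⟨h₁, h₂, _, hk, ?_⟩
  rw [show ((arg z - 2 * k * π : ℝ) : ℂ) * I = arg z * I - k * (2 * π * I) by push_cast; ring,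
    Complex.exp_sub, exp_int_mul_two_pi_mul_I, div_one, norm_mul_exp_arg_mul_I]

lemma exists_mem_carlesonBox {z w : ℂ} {t φ : ℝ} (hz : ‖z‖ < 1) (hw : ‖w‖ < 1)
    (hzt : 1 - t ≤ ‖z‖) (hwt : 1 - t ≤ ‖w‖) (hφ₀ : 0 ≤ φ) (hφt : φ < 2 * π * t)
    (hcos : Real.cos φ = Real.cos (arg z - arg w)) :
    ∃ θ, z ∈ carlesonBox θ t ∧ w ∈ carlesonBox θ t := by
  obtain ⟨k, hk | hk⟩ := Real.cos_eq_cos_iff.1 hcos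
  · refine ⟨arg w, mem_carlesonBox_of_arg_sub_mem k hzt hz ⟨?_, ?_⟩,
      mem_carlesonBox_of_arg_sub_mem 0 hwt hw ⟨?_, ?_⟩⟩ <;> push_cast <;> linarith
  · refine ⟨arg z - 2 * k * π, mem_carlesonBox_of_arg_sub_mem k hzt hz ⟨?_, ?_⟩,
      mem_carlesonBox_of_arg_sub_mem 0 hwt hw ⟨?_, ?_⟩⟩ <;> push_cast <;> linarith

lemma min_one_sq_mul_two_sub_comparable_sq {d : ℝ} (hd₀ : 0 < d) (hd₂ : d < 2) :
    1 / 16 * (min d 1 ^ 2 * (2 - min d 1)) ≤ d ^ 2 ∧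
      d ^ 2 ≤ 8 * (min d 1 ^ 2 * (2 - min d 1)) := by
  rcases le_total d 1 with h | h
  · rw [min_eq_left h]
    constructor <;> nlinarith
  · rw [min_eq_right h]
    constructor <;> nlinarith

theorem stmt1 (z w : ℂ) (hz : ‖z‖ < 1) (hw : ‖w‖ < 1) :
    ∃ θ t : ℝ, 0 < t ∧ t ≤ 1 ∧ z ∈ carlesonBox θ t ∧ w ∈ carlesonBox θ t ∧
      (1 / 16) * nArea (carlesonBox θ t) ≤ ‖1 - z * (starRingEnd ℂ) w‖ ^ 2 ∧
      ‖1 - z * (starRingEnd ℂ) w‖ ^ 2 ≤ 8 * nArea (carlesonBox θ t) := by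
  set d := ‖1 - z * conj w‖
  have hzw : ‖z * conj w‖ = ‖z‖ * ‖w‖ := by rw [norm_mul, norm_conj]
  have hzw_le_z : ‖z‖ * ‖w‖ ≤ ‖z‖ := mul_le_of_le_one_right (norm_nonneg z) hw.le
  have hzw_le_w : ‖z‖ * ‖w‖ ≤ ‖w‖ := mul_le_of_le_one_left (norm_nonneg w) hz.le
  have hd_lower : 1 - ‖z‖ * ‖w‖ ≤ d := by
    simpa [hzw] using norm_sub_norm_le (1 : ℂ) (z * conj w)
  have hd_upper : d < 2 := by
    linarith [hzw ▸ norm_sub_le (1 : ℂ) (z * conj w), norm_one (α := ℂ)]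
  have hd₀ : 0 < d := by linarith
  set t := min d 1
  have ht₀ : 0 < t := lt_min hd₀ one_pos
  have ht₁ : t ≤ 1 := min_le_right d 1
  have hzt : 1 - t ≤ ‖z‖ :=
    sub_le_comm.1 (le_min (by linarith) (sub_le_self 1 (norm_nonneg z)))
  have hwt : 1 - t ≤ ‖w‖ :=
    sub_le_comm.1 (le_min (by linarith) (sub_le_self 1 (norm_nonneg w)))
  -- the angular distance between `z` and `w`, taken in `[0, π]`
  set φ := arccos (Real.cos (arg z - arg w))
  have hcos : Real.cos φ = Real.cos (arg z - arg w) := cos_arccos (neg_one_le_cos _) (cos_le_one _)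
  have hφt : φ < 2 * π * t :=
    lt_two_pi_mul_min_of_sq_eq (by positivity) (by linarith) (arccos_nonneg _) (arccos_le_pi _)
      hd₀.le (hcos ▸ norm_one_sub_mul_conj_sq z w)
  obtain ⟨θ, hzθ, hwθ⟩ := exists_mem_carlesonBox hz hw hzt hwt (arccos_nonneg _) hφt hcos
  refine ⟨θ, t, ht₀, ht₁, hzθ, hwθ, ?_⟩
  rw [nArea_carlesonBox ht₀ ht₁]
  exact min_one_sq_mul_two_sub_comparable_sq hd₀ hd_upper
end

section
/- Let f be holomorphic and square-integrable on the unit disk. Then for 0 < r < 1 and any z in the disk, |f(z)|^2 ≤ (4(1-r)^{-4} / |D(z,r)|) · ∫_{D(z,r)} |f(w)|^2 dA(w), where D(z,r) is the pseudohyperbolic disk and dA is normalized area measure. -/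
open Complex Set MeasureTheory

def unitDisk : Set ℂ := Metric.ball 0 1

/-- Normalized Lebesgue area measure on the plane (the unit disk has measure 1). -/
noncomputable def nVol : Measure ℂ := (ENNReal.ofReal Real.pi)⁻¹ • volume

/-- The pseudohyperbolic disk. -/
def phDisk (a : ℂ) (r : ℝ) : Set ℂ :=
  {z : ℂ | ‖z‖ < 1 ∧ ‖(a - z) / (1 - (starRingEnd ℂ) a * z)‖ < r}

/-!
The pseudohyperbolic disk `D(z, r)` lies between the Euclidean disks centred at `z` of radii
`δ = r (1 - |z|²) / (1 + r)` and `δ (1 + r) / (1 - r)`, because `|1 - z̄ w|` differs from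
`1 - |z|²` by at most `|z - w|`. The area mean value property of the holomorphic function `f²` on
the inner disk gives `|f z|² ≤ δ⁻² ∫_{D(z, δ)} |f|² dA`; enlarging the domain to `D(z, r)` and
using `|D(z, r)| ≤ δ² ((1 + r) / (1 - r))² ≤ 4 δ² / (1 - r)⁴` yields the constant.
-/

open Metric
open scoped Real

section AreaMeanValue

variable {E : Type*} [NormedAddCommGroup E] [NormedSpace ℝ E]

theorem add_polarCoord_symm_eq_circleMap (c : ℂ) (p : ℝ × ℝ) :
    c + Complex.polarCoord.symm p = circleMap c p.1 p.2 := by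
  simp [circleMap, Complex.polarCoord_symm_apply, Complex.exp_mul_I,
    ← Complex.ofReal_cos, ← Complex.ofReal_sin]

theorem setIntegral_ball_eq_setIntegral_polar (f : ℂ → E) (c : ℂ) (δ : ℝ) :
    ∫ w in ball c δ, f w =
      ∫ p in Ioo 0 δ ×ˢ Ioo (-π) π, p.1 • f (circleMap c p.1 p.2) := by
  have htrans : ∫ w in ball c δ, f w = ∫ u, (ball 0 δ).indicator (fun u => f (c + u)) u := by
    rw [← integral_indicator measurableSet_ball,
      ← integral_add_left_eq_self ((ball c δ).indicator f) c]
    congr 1 with u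
    simp only [indicator, mem_ball, dist_eq_norm, add_sub_cancel_left, sub_zero]
  have hpolar : ∀ p ∈ polarCoord.target,
      p.1 • (ball 0 δ).indicator (fun u => f (c + u)) (Complex.polarCoord.symm p) =
        (Ioo 0 δ ×ˢ Ioo (-π) π).indicator (fun p => p.1 • f (circleMap c p.1 p.2)) p := by
    rintro ⟨s, θ⟩ ⟨hs : 0 < s, hθ⟩
    simp only [indicator, mem_ball_zero_iff, Complex.norm_polarCoord_symm, abs_of_pos hs,
      mem_prod, mem_Ioo, hs, true_and, hθ, and_true, add_polarCoord_symm_eq_circleMap]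
    split_ifs <;> simp
  have htarget : polarCoord.target ∩ Ioo 0 δ ×ˢ Ioo (-π) π = Ioo 0 δ ×ˢ Ioo (-π) π :=
    inter_eq_self_of_subset_right (prod_mono Ioo_subset_Ioi_self subset_rfl)
  rw [htrans, ← Complex.integral_comp_polarCoord_symm,
    setIntegral_congr_fun polarCoord.open_target.measurableSet hpolar,
    setIntegral_indicator (measurableSet_Ioo.prod measurableSet_Ioo), htarget]

theorem setIntegral_circleMap_Ioo_eq_smul_circleAverage (f : ℂ → E) (c : ℂ) (s : ℝ) :
    ∫ θ in Ioo (-π) π, f (circleMap c s θ) = (2 * π) • Real.circleAverage f c s := by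
  have hper : Function.Periodic (fun θ => f (circleMap c s θ)) (2 * π) :=
    (periodic_circleMap c s).comp f
  have hshift := hper.intervalIntegral_add_eq (-π) 0
  rw [show -π + 2 * π = π by ring, zero_add] at hshift
  rw [Real.circleAverage_def, smul_inv_smul₀ (by positivity), ← hshift,
    intervalIntegral.integral_of_le (by linarith [Real.pi_pos]), integral_Ioc_eq_integral_Ioo]

theorem setIntegral_ball_eq_integral_circleAverage {f : ℂ → E} {c : ℂ} {δ : ℝ} (hδ : 0 ≤ δ)
    (hf : ContinuousOn f (closedBall c δ)) :
    ∫ w in ball c δ, f w = ∫ s in 0..δ, (2 * π * s) • Real.circleAverage f c s := by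
  have hint : IntegrableOn (fun p : ℝ × ℝ => p.1 • f (circleMap c p.1 p.2))
      (Ioo 0 δ ×ˢ Ioo (-π) π) (volume.prod volume) := by
    refine (ContinuousOn.integrableOn_compact (isCompact_Icc.prod isCompact_Icc) ?_).mono_set
      (prod_mono Ioo_subset_Icc_self Ioo_subset_Icc_self)
    refine continuousOn_fst.smul (hf.comp (by unfold circleMap; fun_prop) ?_)
    rintro ⟨s, θ⟩ ⟨⟨hs0, hsδ⟩, -⟩
    exact closedBall_subset_closedBall hsδ (circleMap_mem_closedBall c hs0 θ)
  rw [setIntegral_ball_eq_setIntegral_polar, Measure.volume_eq_prod, setIntegral_prod _ hint,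
    intervalIntegral.integral_of_le hδ, integral_Ioc_eq_integral_Ioo]
  refine setIntegral_congr_fun measurableSet_Ioo fun s _ => ?_
  rw [integral_smul, setIntegral_circleMap_Ioo_eq_smul_circleAverage, smul_smul, mul_comm s]

end AreaMeanValue

theorem DiffContOnCl.setIntegral_ball_eq_smul {E : Type*} [NormedAddCommGroup E]
    [NormedSpace ℂ E] [CompleteSpace E] {f : ℂ → E}
    {c : ℂ} {δ : ℝ} (hf : DiffContOnCl ℂ f (ball c δ)) (hδ : 0 ≤ δ) :
    ∫ w in ball c δ, f w = (π * δ ^ 2) • f c := by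
  have hmean : ∀ s ∈ uIcc 0 δ, (2 * π * s) • Real.circleAverage f c s = (2 * π * s) • f c := by
    intro s hs
    rw [uIcc_of_le hδ] at hs
    have hsub : ball c |s| ⊆ ball c δ := ball_subset_ball ((abs_of_nonneg hs.1).trans_le hs.2)
    rw [(hf.mono hsub).circleAverage]
  rw [setIntegral_ball_eq_integral_circleAverage hδ (hf.continuousOn_ball),
    intervalIntegral.integral_congr hmean, intervalIntegral.integral_smul_const,
    intervalIntegral.integral_const_mul, integral_id]
  congr 1
  ring

theorem DiffContOnCl.norm_sq_le_setIntegral_ball {f : ℂ → ℂ} {c : ℂ} {δ : ℝ}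
    (hf : DiffContOnCl ℂ f (ball c δ)) (hδ : 0 < δ) :
    ‖f c‖ ^ 2 ≤ (π * δ ^ 2)⁻¹ * ∫ w in ball c δ, ‖f w‖ ^ 2 := by
  have harea : 0 < π * δ ^ 2 := by positivity
  have hmean := (hf.smul hf).setIntegral_ball_eq_smul hδ.le
  simp only [smul_eq_mul] at hmean
  calc ‖f c‖ ^ 2 = (π * δ ^ 2)⁻¹ * ‖∫ w in ball c δ, f w * f w‖ := by
        rw [hmean, norm_smul, Real.norm_of_nonneg harea.le, norm_mul,
          inv_mul_cancel_left₀ harea.ne', sq]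
    _ ≤ (π * δ ^ 2)⁻¹ * ∫ w in ball c δ, ‖f w‖ ^ 2 := by
        gcongr
        refine (norm_integral_le_integral_norm _).trans_eq ?_
        simp only [norm_mul, sq]

theorem setIntegral_nVol (g : ℂ → ℝ) (s : Set ℂ) :
    ∫ w in s, g w ∂nVol = π⁻¹ * ∫ w in s, g w := by
  rw [nVol, Measure.restrict_smul, integral_smul_measure, ENNReal.toReal_inv,
    ENNReal.toReal_ofReal Real.pi_pos.le, smul_eq_mul]

theorem nVol_ball (x : ℂ) {ρ : ℝ} (hρ : 0 ≤ ρ) : nVol (ball x ρ) = ENNReal.ofReal (ρ ^ 2) := by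
  rw [nVol, Measure.smul_apply, Complex.volume_ball, smul_eq_mul, ← ENNReal.ofReal_pow hρ,
    ← ENNReal.ofReal_coe_nnreal, NNReal.coe_real_pi, mul_comm, mul_assoc,
    ENNReal.mul_inv_cancel (by simp [Real.pi_pos]) ENNReal.ofReal_ne_top, mul_one]

theorem toReal_nVol_le_of_subset_ball {s : Set ℂ} {x : ℂ} {ρ : ℝ} (hρ : 0 ≤ ρ)
    (hs : s ⊆ ball x ρ) : (nVol s).toReal ≤ ρ ^ 2 := by
  have := ENNReal.toReal_mono ENNReal.ofReal_ne_top ((measure_mono hs).trans_eq (nVol_ball x hρ))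
  rwa [ENNReal.toReal_ofReal (by positivity)] at this

theorem sq_le_toReal_nVol_of_ball_subset {s : Set ℂ} {x : ℂ} {ρ : ℝ} (hρ : 0 ≤ ρ)
    (hs : ball x ρ ⊆ s) (hfin : nVol s ≠ ⊤) : ρ ^ 2 ≤ (nVol s).toReal := by
  have := ENNReal.toReal_mono hfin ((nVol_ball x hρ).symm.trans_le (measure_mono hs))
  rwa [ENNReal.toReal_ofReal (by positivity)] at this

section PseudohyperbolicDisk

open ComplexConjugate

theorem abs_norm_one_sub_conj_mul_sub_le {z : ℂ} (hz : ‖z‖ ≤ 1) (w : ℂ) :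
    |‖1 - conj z * w‖ - (1 - ‖z‖ ^ 2)| ≤ ‖z - w‖ := by
  have hsplit : 1 - conj z * w = ((1 - ‖z‖ ^ 2 : ℝ) : ℂ) + conj z * (z - w) := by
    rw [mul_sub, ← Complex.normSq_eq_norm_sq, Complex.ofReal_sub, ← Complex.mul_conj,
      mul_comm z]
    push_cast
    ring
  have h1 : 0 ≤ 1 - ‖z‖ ^ 2 := by nlinarith [norm_nonneg z]
  calc |‖1 - conj z * w‖ - (1 - ‖z‖ ^ 2)|
      = |‖((1 - ‖z‖ ^ 2 : ℝ) : ℂ) + conj z * (z - w)‖ - ‖((1 - ‖z‖ ^ 2 : ℝ) : ℂ)‖| := by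
        rw [hsplit, Complex.norm_real, Real.norm_of_nonneg h1]
    _ ≤ ‖conj z * (z - w)‖ := (abs_norm_sub_norm_le _ _).trans_eq (by rw [add_sub_cancel_left])
    _ ≤ ‖z - w‖ := by
        rw [norm_mul, Complex.norm_conj]
        exact mul_le_of_le_one_left (norm_nonneg _) hz

theorem one_sub_conj_mul_ne_zero {z w : ℂ} (hz : ‖z‖ ≤ 1) (hw : ‖w‖ < 1) :
    1 - conj z * w ≠ 0 := by
  refine sub_ne_zero.2 fun h => ?_
  have : ‖conj z * w‖ < 1 := by
    rw [norm_mul, Complex.norm_conj]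
    nlinarith [norm_nonneg w, norm_nonneg z]
  simp [← h] at this

theorem closedBall_subset_unitDisk {z : ℂ} (hz : ‖z‖ < 1) {r : ℝ} (hr0 : 0 ≤ r) (hr1 : r ≤ 1) :
    closedBall z (r * (1 - ‖z‖ ^ 2) / (1 + r)) ⊆ unitDisk := by
  refine closedBall_subset_ball' ?_
  rw [dist_zero_right, div_add' _ _ _ (show (0 : ℝ) < 1 + r by linarith).ne',
    div_lt_one (by positivity)]
  nlinarith [norm_nonneg z, mul_le_mul_of_nonneg_right hr1 (norm_nonneg z)]

theorem ball_subset_phDisk {z : ℂ} (hz : ‖z‖ < 1) {r : ℝ} (hr0 : 0 ≤ r) (hr1 : r ≤ 1) :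
    ball z (r * (1 - ‖z‖ ^ 2) / (1 + r)) ⊆ phDisk z r := by
  intro w hw
  have hw1 : ‖w‖ < 1 := by
    simpa [unitDisk] using closedBall_subset_unitDisk hz hr0 hr1 (ball_subset_closedBall hw)
  rw [mem_ball, dist_comm, dist_eq_norm] at hw
  have hden := (abs_le.1 (abs_norm_one_sub_conj_mul_sub_le hz.le w)).1
  have hradius : r * (1 - ‖z‖ ^ 2) / (1 + r) =
      r * ((1 - ‖z‖ ^ 2) - r * (1 - ‖z‖ ^ 2) / (1 + r)) := by
    field_simp
    ring
  refine ⟨hw1, ?_⟩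
  rw [norm_div, div_lt_iff₀ (norm_pos_iff.2 (one_sub_conj_mul_ne_zero hz.le hw1))]
  calc ‖z - w‖ < r * ((1 - ‖z‖ ^ 2) - r * (1 - ‖z‖ ^ 2) / (1 + r)) := hradius ▸ hw
    _ ≤ r * ‖1 - conj z * w‖ := by gcongr; linarith

theorem phDisk_subset_ball {z : ℂ} (hz : ‖z‖ ≤ 1) {r : ℝ} (hr1 : r < 1) :
    phDisk z r ⊆ ball z (r * (1 - ‖z‖ ^ 2) / (1 - r)) := by
  rintro w ⟨hw1, hw⟩
  have hr0 : 0 < r := (norm_nonneg _).trans_lt hw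
  rw [norm_div, div_lt_iff₀ (norm_pos_iff.2 (one_sub_conj_mul_ne_zero hz hw1))] at hw
  have hden := (abs_le.1 (abs_norm_one_sub_conj_mul_sub_le hz w)).2
  rw [mem_ball, dist_comm, dist_eq_norm, lt_div_iff₀ (by linarith)]
  nlinarith [mul_le_mul_of_nonneg_left hden hr0.le]

end PseudohyperbolicDisk

theorem one_add_div_one_sub_sq_le {r : ℝ} (hr0 : 0 ≤ r) (hr1 : r < 1) :
    ((1 + r) / (1 - r)) ^ 2 ≤ 4 * ((1 - r) ^ 4)⁻¹ := by
  have h1r : 0 < 1 - r := by linarith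
  rw [div_pow, div_le_iff₀ (by positivity), mul_assoc, ← div_eq_inv_mul,
    show (4 : ℝ) * ((1 - r) ^ 2 / (1 - r) ^ 4) = 4 / (1 - r) ^ 2 by field_simp,
    le_div_iff₀ (by positivity)]
  nlinarith [mul_le_mul_of_nonneg_left hr1.le hr0, sq_nonneg (1 - r ^ 2)]

theorem inv_sq_le_div_toReal_nVol_phDisk {z : ℂ} (hz : ‖z‖ < 1) {r : ℝ} (hr0 : 0 < r)
    (hr1 : r < 1) :
    ((r * (1 - ‖z‖ ^ 2) / (1 + r)) ^ 2)⁻¹ ≤ 4 * ((1 - r) ^ 4)⁻¹ / (nVol (phDisk z r)).toReal := by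
  have hcz : 0 < 1 - ‖z‖ ^ 2 := by nlinarith [norm_nonneg z]
  set δ := r * (1 - ‖z‖ ^ 2) / (1 + r) with hδ_def
  have hδ : 0 < δ := by positivity
  have houter : phDisk z r ⊆ ball z (δ * ((1 + r) / (1 - r))) := by
    convert phDisk_subset_ball hz.le hr1 using 2
    rw [hδ_def]
    field_simp [show 1 - r ≠ 0 by linarith]
  have hfin : nVol (phDisk z r) ≠ ⊤ :=
    ((measure_mono houter).trans_lt (nVol_ball z (ρ := δ * ((1 + r) / (1 - r))) (by positivity) ▸
      ENNReal.ofReal_lt_top)).ne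
  have hvol_pos : 0 < (nVol (phDisk z r)).toReal :=
    (pow_pos hδ 2).trans_le
      (sq_le_toReal_nVol_of_ball_subset hδ.le (ball_subset_phDisk hz hr0.le hr1.le) hfin)
  have hvol_le : (nVol (phDisk z r)).toReal ≤ 4 * ((1 - r) ^ 4)⁻¹ * δ ^ 2 :=
    calc _ ≤ (δ * ((1 + r) / (1 - r))) ^ 2 :=
          toReal_nVol_le_of_subset_ball (by positivity) houter
      _ = ((1 + r) / (1 - r)) ^ 2 * δ ^ 2 := by ring
      _ ≤ 4 * ((1 - r) ^ 4)⁻¹ * δ ^ 2 := by gcongr; exact one_add_div_one_sub_sq_le hr0.le hr1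
  rwa [le_div_iff₀ hvol_pos, inv_mul_le_iff₀ (by positivity), mul_comm]

theorem DifferentiableOn.norm_sq_le_setIntegral_ball_nVol {f : ℂ → ℂ} {U : Set ℂ}
    (hf : DifferentiableOn ℂ f U) {c : ℂ} {δ : ℝ} (hδ : 0 < δ) (hU : closedBall c δ ⊆ U) :
    ‖f c‖ ^ 2 ≤ (δ ^ 2)⁻¹ * ∫ w in ball c δ, ‖f w‖ ^ 2 ∂nVol := by
  rw [setIntegral_nVol, ← mul_assoc, ← mul_inv, mul_comm _ π]
  exact (hf.diffContOnCl_ball hU).norm_sq_le_setIntegral_ball hδ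

theorem stmt7 (f : ℂ → ℂ) (hf : DifferentiableOn ℂ f unitDisk)
    (hL2 : IntegrableOn (fun w => ‖f w‖ ^ 2) unitDisk nVol)
    (r : ℝ) (hr0 : 0 < r) (hr1 : r < 1) (z : ℂ) (hz : z ∈ unitDisk) :
    ‖f z‖ ^ 2 ≤ 4 * ((1 - r) ^ 4)⁻¹ / (nVol (phDisk z r)).toReal *
      ∫ w in phDisk z r, ‖f w‖ ^ 2 ∂nVol := by
  have hz1 : ‖z‖ < 1 := mem_ball_zero_iff.1 hz
  set δ := r * (1 - ‖z‖ ^ 2) / (1 + r)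
  have hδ : 0 < δ := by
    have : 0 < 1 - ‖z‖ ^ 2 := by nlinarith [norm_nonneg z]
    positivity
  have hmono : ∫ w in ball z δ, ‖f w‖ ^ 2 ∂nVol ≤ ∫ w in phDisk z r, ‖f w‖ ^ 2 ∂nVol :=
    setIntegral_mono_set (hL2.mono_set fun w hw => mem_ball_zero_iff.2 hw.1)
      (.of_forall fun w => by positivity) (ball_subset_phDisk hz1 hr0.le hr1.le).eventuallyLE
  calc ‖f z‖ ^ 2 ≤ (δ ^ 2)⁻¹ * ∫ w in ball z δ, ‖f w‖ ^ 2 ∂nVol :=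
        hf.norm_sq_le_setIntegral_ball_nVol hδ (closedBall_subset_unitDisk hz1 hr0.le hr1.le)
    _ ≤ (δ ^ 2)⁻¹ * ∫ w in phDisk z r, ‖f w‖ ^ 2 ∂nVol :=
        mul_le_mul_of_nonneg_left hmono (by positivity)
    _ ≤ 4 * ((1 - r) ^ 4)⁻¹ / (nVol (phDisk z r)).toReal * ∫ w in phDisk z r, ‖f w‖ ^ 2 ∂nVol :=
        mul_le_mul_of_nonneg_right (inv_sq_le_div_toReal_nVol_phDisk hz1 hr0 hr1)
          (integral_nonneg fun w => by positivity)
end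

section
/- Let φ: D → D be measurable and suppose the linear map f ↦ f∘φ is bounded from L^3_a(D) to L^3(D). Then for every bounded measurable f on D, the function I_φ f(z) = ∫_D f(w)/(1 - z·conj(φ(w)))^2 dA(w) is holomorphic on D and lies in the Bloch space, with ‖I_φ f‖_β ≤ C‖f‖_∞ for a constant C depending only on the norm of C_φ: L^3_a → L^3. -/
/-!
Differentiating under the integral sign,
`(I_φ f)'(z) = ∫_D 2 f(w) conj(φ w) / (1 - z conj(φ w))³ dA(w)`, so
`|(I_φ f)'(z)| ≤ 2‖f‖_∞ ∫_D |g_z ∘ φ|³` with `g_z(u) = (1 - conj(z) u)⁻¹`, which is holomorphic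
on `D`. Boundedness of `C_φ` on `L³_a` turns this into `2‖f‖_∞ N³ ∫_D |g_z|³`, and the Bergman
estimate `∫_D |1 - z w|⁻³ dA(w) ≤ 2 / (1 - |z|²)` gives the Bloch bound with `C = 4N³ + 1`.

The Bergman estimate: `|1 - z w|⁻³ = |h(w)|²` for `h(w) = (1 - z w)^(-3/2) = ∑ cₙ zⁿ wⁿ`, and
the monomials are orthogonal in `L²(D)` with `‖wⁿ‖² = 1/(n + 1)`, so the integral equals
`∑ cₙ² |z|²ⁿ / (n + 1)`. The binomial coefficients `cₙ = (n+1/2 choose n)` satisfy `cₙ² ≤ 2n + 1`,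
whence the bound `∑ 2 |z|²ⁿ = 2 / (1 - |z|²)`.
-/

open Complex Set MeasureTheory

/-- The twisted Bergman-type projection `I_φ f(z) = ∫_D f(w)/(1 - z·conj(φ(w)))² dA(w)`. -/
noncomputable def Iphi (φ f : ℂ → ℂ) (z : ℂ) : ℂ :=
  ∫ w in unitDisk, f w / (1 - z * (starRingEnd ℂ) (φ w)) ^ 2 ∂nVol

lemma mem_unitDisk {w : ℂ} : w ∈ unitDisk ↔ ‖w‖ < 1 := mem_ball_zero_iff

lemma measurableSet_unitDisk : MeasurableSet unitDisk := measurableSet_ball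

lemma nVol_unitDisk : nVol unitDisk = 1 := by
  have hπ : ENNReal.ofReal Real.pi ≠ 0 := by simp [Real.pi_pos]
  rw [nVol, Measure.smul_apply, smul_eq_mul, unitDisk, Complex.volume_ball, ENNReal.ofReal_one,
    one_pow, one_mul, ← NNReal.coe_real_pi, ENNReal.ofReal_coe_nnreal.symm]
  exact ENNReal.inv_mul_cancel (by simpa using hπ) (by simp)

instance : IsFiniteMeasure (nVol.restrict unitDisk) :=
  ⟨by simp [nVol_unitDisk]⟩

lemma integrableOn_unitDisk_of_bounded {E : Type*} [NormedAddCommGroup E] {f : ℂ → E}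
    (hf : AEStronglyMeasurable f nVol) {M : ℝ} (hM : ∀ w ∈ unitDisk, ‖f w‖ ≤ M) :
    IntegrableOn f unitDisk nVol :=
  Measure.integrableOn_of_bounded (by simp [nVol_unitDisk]) hf
    ((ae_restrict_mem measurableSet_unitDisk).mono hM)

lemma integral_Ioo_exp_int_mul_mul_I (k : ℤ) :
    ∫ θ in Ioo (-Real.pi) Real.pi, exp (k * θ * I) = if k = 0 then (2 * Real.pi : ℂ) else 0 := by
  split_ifs with hk
  · simp [hk, Real.pi_pos.le, two_mul]
  · have hc : (k : ℂ) * I ≠ 0 := mul_ne_zero (Int.cast_ne_zero.mpr hk) I_ne_zero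
    rw [← integral_Ioc_eq_integral_Ioo,
      ← intervalIntegral.integral_of_le (by linarith [Real.pi_pos])]
    simp_rw [mul_right_comm _ _ I]
    rw [integral_exp_mul_complex hc, div_eq_zero_iff, sub_eq_zero]
    left
    rw [show (k : ℂ) * I * Real.pi = k * I * ↑(-Real.pi) + k * (2 * Real.pi * I) by
      push_cast; ring, exp_add, exp_int_mul_two_pi_mul_I, mul_one]

lemma polarCoord_symm_pow_mul_conj_pow (r θ : ℝ) (n m : ℕ) :
    Complex.polarCoord.symm (r, θ) ^ n * (starRingEnd ℂ) (Complex.polarCoord.symm (r, θ)) ^ m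
      = (r : ℂ) ^ (n + m) * exp (((n : ℤ) - m : ℤ) * θ * I) := by
  have hw : Complex.polarCoord.symm (r, θ) = r * exp (θ * I) := by
    simp [exp_mul_I]
  have hconj : (starRingEnd ℂ) (exp (θ * I)) = exp (-(θ * I)) := by
    rw [← exp_conj, map_mul, conj_ofReal, conj_I, mul_neg]
  rw [hw, map_mul, conj_ofReal, hconj, mul_pow, mul_pow, ← exp_nat_mul, ← exp_nat_mul, pow_add,
    mul_mul_mul_comm, ← exp_add]
  push_cast
  ring_nf

lemma integral_Ioo_zero_one_pow (k : ℕ) : ∫ r in Ioo (0 : ℝ) 1, (r : ℂ) ^ k = ((k : ℂ) + 1)⁻¹ := by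
  rw [← integral_Ioc_eq_integral_Ioo, ← intervalIntegral.integral_of_le zero_le_one]
  simp_rw [← ofReal_pow, intervalIntegral.integral_ofReal, integral_pow]
  push_cast
  ring

lemma setIntegral_unitDisk_pow_mul_conj_pow_volume (n m : ℕ) :
    ∫ w in unitDisk, w ^ n * (starRingEnd ℂ) w ^ m
      = if n = m then (Real.pi : ℂ) / (n + 1) else 0 := by
  let radial : ℝ → ℂ := (Ioo (0 : ℝ) 1).indicator fun r => (r : ℂ) ^ (n + m + 1)
  have hpolar : ∀ p ∈ Ioi (0 : ℝ) ×ˢ Ioo (-Real.pi) Real.pi, p.1 • unitDisk.indicator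
      (fun w => w ^ n * (starRingEnd ℂ) w ^ m) (Complex.polarCoord.symm p)
        = radial p.1 * exp (((n : ℤ) - m : ℤ) * p.2 * I) := by
    rintro ⟨r, θ⟩ ⟨hr, -⟩
    have hr : 0 < r := hr
    have hmem : Complex.polarCoord.symm (r, θ) ∈ unitDisk ↔ r ∈ Ioo (0 : ℝ) 1 := by
      simp [mem_unitDisk, abs_of_pos hr, hr]
    by_cases h1 : r ∈ Ioo (0 : ℝ) 1
    · simp only [indicator_of_mem (hmem.mpr h1), indicator_of_mem h1, radial,
        polarCoord_symm_pow_mul_conj_pow, real_smul]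
      ring
    · simp only [indicator_of_notMem (mt hmem.mp h1), radial, indicator_of_notMem h1, smul_zero,
        zero_mul]
  rw [← integral_indicator measurableSet_unitDisk, ← Complex.integral_comp_polarCoord_symm,
    polarCoord_target, setIntegral_congr_fun (measurableSet_Ioi.prod measurableSet_Ioo) hpolar,
    Measure.volume_eq_prod,
    setIntegral_prod_mul radial (fun θ : ℝ => exp (((n : ℤ) - m : ℤ) * θ * I)),
    setIntegral_indicator measurableSet_Ioo, inter_eq_right.mpr Ioo_subset_Ioi_self,
    integral_Ioo_zero_one_pow, integral_Ioo_exp_int_mul_mul_I]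
  by_cases hnm : n = m
  · subst hnm
    simp only [sub_self, if_true]
    rw [show ((n + n + 1 : ℕ) : ℂ) + 1 = 2 * ((n : ℂ) + 1) by push_cast; ring]
    field_simp
  · simp [sub_eq_zero, hnm]

lemma setIntegral_unitDisk_pow_mul_conj_pow (n m : ℕ) :
    ∫ w in unitDisk, w ^ n * (starRingEnd ℂ) w ^ m ∂nVol
      = if n = m then ((n : ℂ) + 1)⁻¹ else 0 := by
  rw [nVol, Measure.restrict_smul, integral_smul_measure,
    setIntegral_unitDisk_pow_mul_conj_pow_volume, ENNReal.toReal_inv,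
    ENNReal.toReal_ofReal Real.pi_pos.le]
  split_ifs
  · rw [Complex.real_smul]
    push_cast
    field_simp
  · rw [smul_zero]

lemma ofReal_sq_norm_tsum {ι : Type*} {f : ι → ℂ} (hf : Summable fun i => ‖f i‖) :
    ((‖∑' i, f i‖ ^ 2 : ℝ) : ℂ) = ∑' p : ι × ι, f p.1 * (starRingEnd ℂ) (f p.2) := by
  rw [ofReal_pow, ← mul_conj', conj_tsum,
    tsum_mul_tsum_of_summable_norm hf (by simpa only [RCLike.norm_conj] using hf)]

lemma tsum_prod_ite_fst_eq_snd {α M : Type*} [AddCommMonoid M] [TopologicalSpace M]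
    [DecidableEq α] (g : α → M) :
    ∑' p : α × α, (if p.1 = p.2 then g p.1 else 0) = ∑' a, g a := by
  refine (Function.Injective.tsum_eq (g := fun a => (a, a)) (fun _ _ h => congrArg Prod.fst h)
    ?_).symm.trans (by simp)
  rintro ⟨a, b⟩ hab
  obtain rfl : a = b := by by_contra h; simp [h] at hab
  exact ⟨a, rfl⟩

theorem setIntegral_unitDisk_sq_norm_tsum {a : ℕ → ℂ} (ha : Summable fun n => ‖a n‖) :
    ∫ w in unitDisk, ‖∑' n, a n * w ^ n‖ ^ 2 ∂nVol = ∑' n, ‖a n‖ ^ 2 / (n + 1) := by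
  have hterm_le : ∀ n, ∀ w ∈ unitDisk, ‖a n * w ^ n‖ ≤ ‖a n‖ := fun n w hw => by
    rw [norm_mul, norm_pow]
    exact mul_le_of_le_one_right (norm_nonneg _)
      (pow_le_one₀ (norm_nonneg w) (mem_unitDisk.mp hw).le)
  let term : ℕ × ℕ → ℂ → ℂ := fun p w => a p.1 * w ^ p.1 * (starRingEnd ℂ) (a p.2 * w ^ p.2)
  have hterm_norm : ∀ p, ∀ w ∈ unitDisk, ‖term p w‖ ≤ ‖a p.1‖ * ‖a p.2‖ := fun p w hw => by
    simp only [term, norm_mul (a p.1 * _), RCLike.norm_conj]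
    exact mul_le_mul (hterm_le _ w hw) (hterm_le _ w hw) (norm_nonneg _) (norm_nonneg _)
  have hint : ∀ p, IntegrableOn (term p) unitDisk nVol := fun p =>
    integrableOn_unitDisk_of_bounded (by fun_prop) (hterm_norm p)
  have hint_norm : Summable fun p => ∫ w in unitDisk, ‖term p w‖ ∂nVol := by
    refine (ha.mul_of_nonneg ha (fun _ => norm_nonneg _) (fun _ => norm_nonneg _)).of_nonneg_of_le
      (fun p => integral_nonneg fun _ => norm_nonneg _) fun p => ?_
    calc ∫ w in unitDisk, ‖term p w‖ ∂nVol ≤ ∫ _ in unitDisk, ‖a p.1‖ * ‖a p.2‖ ∂nVol :=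
          setIntegral_mono_on (hint p).norm (integrable_const _) measurableSet_unitDisk
            (hterm_norm p)
      _ = ‖a p.1‖ * ‖a p.2‖ := by simp [Measure.real, nVol_unitDisk]
  have hdiag : ∀ p : ℕ × ℕ, ∫ w in unitDisk, term p w ∂nVol
      = if p.1 = p.2 then ((‖a p.1‖ ^ 2 / (p.1 + 1) : ℝ) : ℂ) else 0 := by
    rintro ⟨i, j⟩
    have hsplit : term (i, j) = fun w =>
        a i * (starRingEnd ℂ) (a j) * (w ^ i * (starRingEnd ℂ) w ^ j) := by
      ext w; simp only [term, map_mul, map_pow]; ring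
    rw [hsplit, integral_const_mul, setIntegral_unitDisk_pow_mul_conj_pow]
    split_ifs with h
    · subst h; rw [mul_conj']; push_cast; ring
    · rw [mul_zero]
  apply ofReal_injective
  rw [← integral_complex_ofReal, setIntegral_congr_fun measurableSet_unitDisk fun w hw =>
      ofReal_sq_norm_tsum (ha.of_nonneg_of_le (fun _ => norm_nonneg _) fun n => hterm_le n w hw),
    ← integral_tsum_of_summable_integral_norm hint hint_norm, tsum_congr hdiag, ofReal_tsum]
  exact tsum_prod_ite_fst_eq_snd fun n => ((‖a n‖ ^ 2 / (n + 1) : ℝ) : ℂ)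

noncomputable def threeHalvesCoeff (n : ℕ) : ℝ := Ring.choose ((n : ℝ) + 1 / 2) n

lemma threeHalvesCoeff_succ (n : ℕ) :
    ((n : ℝ) + 1) * threeHalvesCoeff (n + 1) = ((n : ℝ) + 3 / 2) * threeHalvesCoeff n := by
  have pascal := Ring.choose_succ_succ ((n : ℝ) + 1 / 2) n
  have absorb := Ring.choose_smul_choose ((n : ℝ) + 1 / 2) (Nat.le_succ n)
  simp only [Nat.succ_eq_add_one, Nat.add_sub_cancel_left, Ring.choose_one_right,
    add_sub_cancel_left, Nat.choose_succ_self_right, nsmul_eq_mul] at absorb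
  simp only [threeHalvesCoeff]
  push_cast at absorb ⊢
  rw [show (n : ℝ) + 1 + 1 / 2 = (n : ℝ) + 1 / 2 + 1 by ring, pascal]
  linear_combination absorb

lemma hasSum_threeHalvesCoeff_mul_pow {u : ℂ} (hu : ‖u‖ < 1) :
    HasSum (fun n => (threeHalvesCoeff n : ℂ) * u ^ n) (1 / (1 - u) ^ (3 / 2 : ℂ)) := by
  have hu' : u ∈ Metric.eball (0 : ℂ) 1 := by
    rwa [Metric.mem_eball, edist_zero_right, ← ofReal_norm, ENNReal.ofReal_lt_one]
  have h := (one_div_one_sub_cpow_hasFPowerSeriesOnBall_zero (3 / 2)).hasSum hu'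
  rw [zero_add] at h
  refine h.congr_fun fun n => ?_
  rw [FormalMultilinearSeries.ofScalars_apply_eq, smul_eq_mul, threeHalvesCoeff, mul_comm]
  push_cast
  ring_nf

lemma sq_threeHalvesCoeff_le (n : ℕ) : threeHalvesCoeff n ^ 2 ≤ 2 * n + 1 := by
  induction n with
  | zero => simp [threeHalvesCoeff]
  | succ n ih =>
    have hrec : threeHalvesCoeff (n + 1) =
        ((n : ℝ) + 3 / 2) * threeHalvesCoeff n / ((n : ℝ) + 1) := by
      rw [← threeHalvesCoeff_succ]; field_simp
    rw [hrec, div_pow, div_le_iff₀ (by positivity), mul_pow]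
    push_cast
    nlinarith [mul_le_mul_of_nonneg_left ih (sq_nonneg ((n : ℝ) + 3 / 2))]

lemma abs_threeHalvesCoeff_le (n : ℕ) : |threeHalvesCoeff n| ≤ n + 1 := by
  apply abs_le_of_sq_le_sq _ (by positivity)
  nlinarith [sq_threeHalvesCoeff_le n, sq_nonneg (n : ℝ)]

lemma sq_norm_one_div_cpow_three_halves (x : ℂ) : ‖1 / x ^ (3 / 2 : ℂ)‖ ^ 2 = ‖x‖⁻¹ ^ 3 := by
  have h := norm_cpow_real x (3 / 2)
  push_cast at h
  rw [norm_div, norm_one, h, one_div, inv_pow, inv_pow, ← Real.rpow_natCast,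
    ← Real.rpow_mul (norm_nonneg x)]
  norm_num

theorem setIntegral_unitDisk_inv_norm_one_sub_mul_pow_three_le {z : ℂ} (hz : ‖z‖ < 1) :
    ∫ w in unitDisk, ‖1 - z * w‖⁻¹ ^ 3 ∂nVol ≤ 2 / (1 - ‖z‖ ^ 2) := by
  set r := ‖z‖
  let a : ℕ → ℂ := fun n => threeHalvesCoeff n * z ^ n
  have ha_norm : ∀ n, ‖a n‖ = |threeHalvesCoeff n| * r ^ n := fun n => by
    simp [a, norm_pow, r]
  have ha : Summable fun n => ‖a n‖ := by
    have hr : ‖r‖ < 1 := by rwa [Real.norm_of_nonneg (norm_nonneg z)]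
    refine ((summable_pow_mul_geometric_of_norm_lt_one 1 hr).add
      (summable_geometric_of_lt_one (norm_nonneg z) hz)).of_nonneg_of_le
      (fun n => norm_nonneg _) fun n => ?_
    rw [ha_norm, pow_one, ← add_one_mul]
    exact mul_le_mul_of_nonneg_right (abs_threeHalvesCoeff_le n) (by positivity)
  have hkernel : ∀ w ∈ unitDisk, ‖1 - z * w‖⁻¹ ^ 3 = ‖∑' n, a n * w ^ n‖ ^ 2 := by
    intro w hw
    have hzw : ‖z * w‖ < 1 := by
      rw [norm_mul]
      exact mul_lt_one_of_nonneg_of_lt_one_left (norm_nonneg z) hz (mem_unitDisk.mp hw).le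
    rw [← sq_norm_one_div_cpow_three_halves, ← (hasSum_threeHalvesCoeff_mul_pow hzw).tsum_eq]
    simp only [a, mul_pow, mul_assoc]
  have hcoeff : ∀ n : ℕ, ‖a n‖ ^ 2 / (n + 1) ≤ 2 * (r ^ 2) ^ n := fun n => by
    rw [ha_norm, mul_pow, sq_abs, ← pow_mul, pow_mul', mul_div_right_comm]
    refine mul_le_mul_of_nonneg_right ?_ (by positivity)
    rw [div_le_iff₀ (by positivity)]
    linarith [sq_threeHalvesCoeff_le n]
  have hr2 : r ^ 2 < 1 := by nlinarith [norm_nonneg z]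
  have hgeom := (summable_geometric_of_lt_one (sq_nonneg r) hr2).mul_left 2
  calc ∫ w in unitDisk, ‖1 - z * w‖⁻¹ ^ 3 ∂nVol
      = ∑' n, ‖a n‖ ^ 2 / (n + 1) := by
        rw [setIntegral_congr_fun measurableSet_unitDisk hkernel,
          setIntegral_unitDisk_sq_norm_tsum ha]
    _ ≤ ∑' n : ℕ, 2 * (r ^ 2) ^ n :=
        (hgeom.of_nonneg_of_le (fun n => by positivity) hcoeff).tsum_le_tsum hcoeff hgeom
    _ = 2 / (1 - r ^ 2) := by
        rw [tsum_mul_left, tsum_geometric_of_lt_one (sq_nonneg r) hr2, div_eq_mul_inv]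

lemma sub_le_norm_one_sub_mul {x c : ℂ} {ρ : ℝ} (hx : ‖x‖ ≤ ρ) (hc : ‖c‖ ≤ 1) :
    1 - ρ ≤ ‖1 - x * c‖ := by
  have hxc : ‖x * c‖ ≤ ρ := by
    rw [norm_mul]
    exact (mul_le_of_le_one_right (norm_nonneg x) hc).trans hx
  calc 1 - ρ ≤ ‖(1 : ℂ)‖ - ‖x * c‖ := by rw [norm_one]; linarith
    _ ≤ ‖1 - x * c‖ := norm_sub_norm_le _ _

lemma hasDerivAt_div_one_sub_mul_sq (a c x : ℂ) (h : 1 - x * c ≠ 0) :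
    HasDerivAt (fun x => a / (1 - x * c) ^ 2) (a * (2 * c) / (1 - x * c) ^ 3) x := by
  have hlin : HasDerivAt (fun x => 1 - x * c) (-c) x := by
    simpa using ((hasDerivAt_id x).mul_const c).const_sub 1
  refine ((hasDerivAt_const x a).div (hlin.fun_pow 2) (pow_ne_zero 2 h)).congr_deriv ?_
  field_simp
  ring

theorem hasDerivAt_integral_div_one_sub_mul_sq {α : Type*} [MeasurableSpace α] {μ : Measure α}
    {f c : α → ℂ} (hf : Integrable f μ) (hc : AEMeasurable c μ)
    (hc1 : ∀ᵐ w ∂μ, ‖c w‖ ≤ 1) {z : ℂ} (hz : ‖z‖ < 1) :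
    HasDerivAt (fun x => ∫ w, f w / (1 - x * c w) ^ 2 ∂μ)
      (∫ w, f w * (2 * c w) / (1 - z * c w) ^ 3 ∂μ) z := by
  set ε := (1 - ‖z‖) / 2
  have hε : 0 < ε := by simp only [ε]; linarith
  have hball : ∀ x ∈ Metric.ball z ε, ‖x‖ ≤ 1 - ε := fun x hx => by
    have := norm_le_norm_add_norm_sub' x z
    rw [mem_ball_iff_norm] at hx
    simp only [ε] at hx ⊢
    linarith
  have hden : ∀ᵐ w ∂μ, ∀ x ∈ Metric.ball z ε, ε ≤ ‖1 - x * c w‖ := by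
    filter_upwards [hc1] with w hw x hx
    simpa using sub_le_norm_one_sub_mul (hball x hx) hw
  have hden_pos : ∀ᵐ w ∂μ, ∀ x ∈ Metric.ball z ε, 1 - x * c w ≠ 0 := by
    filter_upwards [hden] with w hw x hx
    exact norm_pos_iff.mp (hε.trans_le (hw x hx))
  have hmeas : ∀ x : ℂ, AEStronglyMeasurable (fun w => f w / (1 - x * c w) ^ 2) μ := fun x =>
    (hf.aemeasurable.div
      ((aemeasurable_const.sub (hc.const_mul x)).pow_const 2)).aestronglyMeasurable
  refine (hasDerivAt_integral_of_dominated_loc_of_deriv_le (Metric.ball_mem_nhds z hε)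
    (Filter.Eventually.of_forall hmeas) ?_
    (F' := fun x w => f w * (2 * c w) / (1 - x * c w) ^ 3) ?_
    (bound := fun w => 2 * ‖f w‖ / ε ^ 3) ?_
    ((hf.norm.const_mul 2).div_const _) ?_).2
  · refine (hf.norm.div_const (ε ^ 2)).mono' (hmeas z) ?_
    filter_upwards [hden] with w hw
    rw [norm_div, norm_pow]
    exact div_le_div_of_nonneg_left (norm_nonneg _) (by positivity)
      (pow_le_pow_left₀ hε.le (hw z (Metric.mem_ball_self hε)) 2)
  · exact ((hf.aemeasurable.mul (hc.const_mul 2)).div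
      ((aemeasurable_const.sub (hc.const_mul z)).pow_const 3)).aestronglyMeasurable
  · filter_upwards [hden, hc1] with w hw hcw x hx
    rw [norm_div, norm_mul, norm_mul, norm_pow, RCLike.norm_ofNat]
    refine div_le_div₀ (by positivity) ?_ (by positivity) (pow_le_pow_left₀ hε.le (hw x hx) 3)
    nlinarith [norm_nonneg (f w)]
  · filter_upwards [hden_pos] with w hw x hx
    exact hasDerivAt_div_one_sub_mul_sq (f w) (c w) x (hw x hx)

lemma norm_inv_one_sub_mul_le {z u : ℂ} (hz : ‖z‖ < 1) (hu : ‖u‖ ≤ 1) :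
    ‖(1 - z * u)⁻¹‖ ≤ (1 - ‖z‖)⁻¹ := by
  rw [norm_inv]
  exact inv_anti₀ (by linarith) (sub_le_norm_one_sub_mul le_rfl hu)

lemma integrableOn_unitDisk_norm_inv_one_sub_mul_comp_pow {z : ℂ} (hz : ‖z‖ < 1) {ψ : ℂ → ℂ}
    (hψ : Measurable ψ) (hmaps : MapsTo ψ unitDisk unitDisk) (k : ℕ) :
    IntegrableOn (fun w => ‖(1 - z * ψ w)⁻¹‖ ^ k) unitDisk nVol :=
  integrableOn_unitDisk_of_bounded (by fun_prop) fun w hw => by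
    rw [norm_pow, norm_norm]
    exact pow_le_pow_left₀ (norm_nonneg _)
      (norm_inv_one_sub_mul_le hz (mem_unitDisk.mp (hmaps hw)).le) k

lemma differentiableOn_inv_one_sub_mul {c : ℂ} (hc : ‖c‖ ≤ 1) :
    DifferentiableOn ℂ (fun u => (1 - c * u)⁻¹) unitDisk := by
  refine DifferentiableOn.inv (by fun_prop) fun u hu => ?_
  rw [mul_comm, ← norm_pos_iff]
  have := sub_le_norm_one_sub_mul le_rfl hc (x := u)
  linarith [mem_unitDisk.mp hu]

lemma hasDerivAt_Iphi {φ f : ℂ → ℂ} (hφ : Measurable φ) (hmaps : MapsTo φ unitDisk unitDisk)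
    (hf : IntegrableOn f unitDisk nVol) {z : ℂ} (hz : z ∈ unitDisk) :
    HasDerivAt (Iphi φ f)
      (∫ w in unitDisk, f w * (2 * (starRingEnd ℂ) (φ w)) /
        (1 - z * (starRingEnd ℂ) (φ w)) ^ 3 ∂nVol) z := by
  refine hasDerivAt_integral_div_one_sub_mul_sq hf (by fun_prop) ?_ (mem_unitDisk.mp hz)
  filter_upwards [ae_restrict_mem measurableSet_unitDisk] with w hw
  simpa using (mem_unitDisk.mp (hmaps hw)).le

lemma norm_deriv_Iphi_le {φ f : ℂ → ℂ} (hφ : Measurable φ) (hmaps : MapsTo φ unitDisk unitDisk)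
    (hf : Measurable f) {B : ℝ} (hB : ∀ w ∈ unitDisk, ‖f w‖ ≤ B) {z : ℂ} (hz : z ∈ unitDisk) :
    ‖deriv (Iphi φ f) z‖
      ≤ 2 * B * ∫ w in unitDisk, ‖(1 - (starRingEnd ℂ) z * φ w)⁻¹‖ ^ 3 ∂nVol := by
  rw [(hasDerivAt_Iphi hφ hmaps
    (integrableOn_unitDisk_of_bounded hf.aestronglyMeasurable hB) hz).deriv, ← integral_const_mul]
  refine norm_integral_le_of_norm_le
    ((integrableOn_unitDisk_norm_inv_one_sub_mul_comp_pow (by simpa using mem_unitDisk.mp hz)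
      hφ hmaps 3).const_mul _) ?_
  filter_upwards [ae_restrict_mem measurableSet_unitDisk] with w hw
  have hconj : ‖1 - z * (starRingEnd ℂ) (φ w)‖ = ‖1 - (starRingEnd ℂ) z * φ w‖ := by
    rw [← RCLike.norm_conj, map_sub, map_one, map_mul, conj_conj]
  have hφw : ‖φ w‖ ≤ 1 := (mem_unitDisk.mp (hmaps hw)).le
  rw [norm_div, norm_mul, norm_mul, norm_pow, RCLike.norm_conj, RCLike.norm_ofNat, hconj, norm_inv,
    inv_pow, ← div_eq_mul_inv]
  refine div_le_div_of_nonneg_right ?_ (by positivity)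
  nlinarith [hB w hw, norm_nonneg (f w), norm_nonneg (φ w)]

/-- If `C_φ : L³_a(D) → L³(D)` is bounded, then for every bounded measurable `f` on `D`,
`I_φ f` is holomorphic on `D` and lies in the Bloch space with `‖I_φ f‖_β ≤ C‖f‖_∞`,
where `C` depends only on the norm of `C_φ`. -/
theorem stmt15 (φ : ℂ → ℂ) (hφm : Measurable φ) (hmaps : Set.MapsTo φ unitDisk unitDisk)
    (N : ℝ) (hN : 0 ≤ N)
    (hbound : ∀ g : ℂ → ℂ, DifferentiableOn ℂ g unitDisk →
      IntegrableOn (fun w => ‖g w‖ ^ 3) unitDisk nVol →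
      (∫ w in unitDisk, ‖g (φ w)‖ ^ 3 ∂nVol) ≤ N ^ 3 * ∫ w in unitDisk, ‖g w‖ ^ 3 ∂nVol) :
    ∃ C > (0:ℝ), ∀ f : ℂ → ℂ, Measurable f → ∀ B : ℝ, (∀ w ∈ unitDisk, ‖f w‖ ≤ B) →
      DifferentiableOn ℂ (Iphi φ f) unitDisk ∧
      ∀ z ∈ unitDisk, (1 - ‖z‖ ^ 2) * ‖deriv (Iphi φ f) z‖ ≤ C * B := by
  refine ⟨4 * N ^ 3 + 1, by positivity, fun f hf B hB => ⟨fun z hz => ?_, fun z hz => ?_⟩⟩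
  · exact (hasDerivAt_Iphi hφm hmaps (integrableOn_unitDisk_of_bounded hf.aestronglyMeasurable hB)
      hz).differentiableAt.differentiableWithinAt
  have hz' : ‖(starRingEnd ℂ) z‖ < 1 := by simpa using mem_unitDisk.mp hz
  have hB0 : 0 ≤ B := (norm_nonneg _).trans (hB 0 (by simp [mem_unitDisk]))
  have h1z : 0 < 1 - ‖z‖ ^ 2 := by nlinarith [norm_nonneg z, mem_unitDisk.mp hz]
  have hcompose := hbound (fun u => (1 - (starRingEnd ℂ) z * u)⁻¹)
    (differentiableOn_inv_one_sub_mul hz'.le)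
    (integrableOn_unitDisk_norm_inv_one_sub_mul_comp_pow hz' measurable_id (mapsTo_id _) 3)
  have hbergman := setIntegral_unitDisk_inv_norm_one_sub_mul_pow_three_le hz'
  have hderiv := norm_deriv_Iphi_le hφm hmaps hf hB hz
  simp only [norm_inv, RCLike.norm_conj] at hcompose hbergman hderiv
  calc (1 - ‖z‖ ^ 2) * ‖deriv (Iphi φ f) z‖
      ≤ (1 - ‖z‖ ^ 2) * (2 * B * ∫ w in unitDisk, ‖1 - (starRingEnd ℂ) z * φ w‖⁻¹ ^ 3 ∂nVol) := by
        gcongr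
    _ ≤ (1 - ‖z‖ ^ 2) * (2 * B * (N ^ 3 * (2 / (1 - ‖z‖ ^ 2)))) := by
        gcongr
        exact hcompose.trans (by gcongr)
    _ = 4 * N ^ 3 * B := by field_simp; ring
    _ ≤ (4 * N ^ 3 + 1) * B := by nlinarith
end
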